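/- arXiv:2110.07263 — 2 statements merged into one kernel-verified Lean document; each statement's English description precedes it below -/
import Mathlib

section
/- Let 1 < p < ∞ and N ≥ 1. There exists a constant C = C(p) > 0 such that for all vectors a, b ∈ ℝ^N one has ⟨|a|^{p-2} a − |b|^{p-2} b, a − b⟩ ≥ C (|a| + |b|)^{p-2} |a − b|², where ⟨·,·⟩ and |·| denote the Euclidean inner product and norm. -/
open RealInnerProductSpace

/-!
With `x = ‖a‖`, `y = ‖b‖` and `s = ⟪a, b⟫`, both sides of the inequality are affine in
`s ∈ [-x y, x y]`, so it suffices to check the two endpoints, where `b` is parallel or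
antiparallel to `a`. The antiparallel case is `C (x + y) ^ (p - 1) ≤ x ^ (p - 1) + y ^ (p - 1)`,
which holds for `C ≤ 2 ^ (1 - p)`. In the parallel case `y ≤ x`, one compares
`x ^ (p - 1) - y ^ (p - 1)` with `x ^ (p - 2) (x - y)`: from below by the tangent line of the
concave map `t ↦ t ^ (p - 1)` (Bernoulli) when `p ≤ 2`, giving the factor `p - 1`, and by
monotonicity when `p ≥ 2`. Hence `C = min (p - 1) (2 ^ (1 - p))` works.
-/

lemma mul_add_nonneg_of_mem_Icc {m k u v s : ℝ} (hs : s ∈ Set.Icc u v) (hu : 0 ≤ m * u + k)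
    (hv : 0 ≤ m * v + k) : 0 ≤ m * s + k := by
  obtain ⟨hus, hsv⟩ := hs
  rcases le_total 0 m with hm | hm <;> nlinarith

namespace Real

lemma rpow_sub_two_mul_self {x p : ℝ} (hx : 0 ≤ x) (hp : p ≠ 1) :
    x ^ (p - 2) * x = x ^ (p - 1) := by
  rw [← rpow_add_one' hx (by contrapose! hp; linarith)]
  ring_nf

lemma add_rpow_le_two_rpow_mul_add_rpow {x y q : ℝ} (hx : 0 ≤ x) (hy : 0 ≤ y) (hq : 0 ≤ q) :
    (x + y) ^ q ≤ 2 ^ q * (x ^ q + y ^ q) := by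
  have hmax : (x + y) ^ q ≤ 2 ^ q * max x y ^ q := by
    rw [← mul_rpow zero_le_two (le_max_of_le_left hx)]
    gcongr
    linarith [le_max_left x y, le_max_right x y]
  have : max x y ^ q ≤ x ^ q + y ^ q := by
    rcases max_choice x y with h | h <;> rw [h]
    · linarith [rpow_nonneg hy q]
    · linarith [rpow_nonneg hx q]
  exact hmax.trans (by gcongr)

lemma sub_one_mul_rpow_sub_two_mul_sub_le {x y p : ℝ} (hp1 : 1 < p) (hp2 : p ≤ 2) (hy : 0 ≤ y)
    (hx : 0 < x) :
    (p - 1) * x ^ (p - 2) * (x - y) ≤ x ^ (p - 1) - y ^ (p - 1) := by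
  have hbern := rpow_one_add_le_one_add_mul_self (s := y / x - 1) (p := p - 1)
    (by linarith [div_nonneg hy hx.le]) (by linarith) (by linarith)
  rw [add_sub_cancel, div_rpow hy hx.le, div_le_iff₀ (rpow_pos_of_pos hx _)] at hbern
  have hx1 := rpow_sub_two_mul_self hx.le hp1.ne'
  have : (p - 1) * x ^ (p - 2) * (x - y) = (p - 1) * (x ^ (p - 1) - y / x * x ^ (p - 1)) := by
    rw [← hx1]; field_simp
  rw [this]
  nlinarith [rpow_pos_of_pos hx (p - 1)]

lemma rpow_sub_two_mul_sub_le {x y p : ℝ} (hp : 2 ≤ p) (hy : 0 ≤ y) (hyx : y ≤ x) :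
    x ^ (p - 2) * (x - y) ≤ x ^ (p - 1) - y ^ (p - 1) := by
  have hy1 : y ^ (p - 1) ≤ x ^ (p - 2) * y := by
    rw [← rpow_sub_two_mul_self hy (by linarith)]
    gcongr
  rw [mul_sub, rpow_sub_two_mul_self (hy.trans hyx) (by linarith)]
  linarith

lemma mul_add_rpow_mul_add_sq_le {x y p c : ℝ} (hp : 1 < p) (hc : c ≤ 2 ^ (1 - p))
    (hx : 0 ≤ x) (hy : 0 ≤ y) :
    c * (x + y) ^ (p - 2) * (x + y) ^ 2 ≤ (x ^ (p - 1) + y ^ (p - 1)) * (x + y) := by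
  have hxy := add_nonneg hx hy
  have hpow : c * (x + y) ^ (p - 1) ≤ x ^ (p - 1) + y ^ (p - 1) :=
    calc c * (x + y) ^ (p - 1)
        ≤ 2 ^ (1 - p) * (2 ^ (p - 1) * (x ^ (p - 1) + y ^ (p - 1))) := by
          gcongr
          · exact add_rpow_le_two_rpow_mul_add_rpow hx hy (by linarith)
      _ = x ^ (p - 1) + y ^ (p - 1) := by
          rw [← mul_assoc, ← rpow_add two_pos]; norm_num
  calc c * (x + y) ^ (p - 2) * (x + y) ^ 2
      = c * (x + y) ^ (p - 1) * (x + y) := by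
        rw [← rpow_sub_two_mul_self hxy hp.ne']; ring
    _ ≤ _ := by gcongr

lemma mul_add_rpow_mul_sub_sq_le_of_le {x y p c : ℝ} (hp : 1 < p) (hc₁ : c ≤ p - 1)
    (hc₂ : c ≤ 2 ^ (1 - p)) (hy : 0 ≤ y) (hyx : y ≤ x) :
    c * (x + y) ^ (p - 2) * (x - y) ^ 2 ≤ (x ^ (p - 1) - y ^ (p - 1)) * (x - y) := by
  rcases hyx.eq_or_lt with rfl | hyx
  · simp
  have hx : 0 < x := hy.trans_lt hyx
  suffices c * (x + y) ^ (p - 2) ≤ x ^ (p - 2) * min 1 (p - 1) by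
    have hslope : x ^ (p - 2) * min 1 (p - 1) * (x - y) ≤ x ^ (p - 1) - y ^ (p - 1) := by
      rcases le_total p 2 with hp2 | hp2
      · rw [min_eq_right (by linarith)]
        linarith [sub_one_mul_rpow_sub_two_mul_sub_le hp hp2 hy hx]
      · rw [min_eq_left (by linarith), mul_one]
        exact rpow_sub_two_mul_sub_le hp2 hy hyx.le
    calc c * (x + y) ^ (p - 2) * (x - y) ^ 2
        = c * (x + y) ^ (p - 2) * (x - y) * (x - y) := by ring
      _ ≤ _ := by
        gcongr
        exact (mul_le_mul_of_nonneg_right this (sub_nonneg.2 hyx.le)).trans hslope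
  have hxy : 0 ≤ (x + y) ^ (p - 2) := rpow_nonneg (by linarith) _
  rcases le_total p 2 with hp2 | hp2
  · rw [min_eq_right (by linarith), mul_comm (x ^ _)]
    calc c * (x + y) ^ (p - 2) ≤ (p - 1) * (x + y) ^ (p - 2) := by gcongr
      _ ≤ (p - 1) * x ^ (p - 2) :=
        mul_le_mul_of_nonneg_left (rpow_le_rpow_of_nonpos hx (by linarith) (by linarith))
          (by linarith)
  · rw [min_eq_left (by linarith), mul_one]
    calc c * (x + y) ^ (p - 2) ≤ 2 ^ (2 - p) * (2 ^ (p - 2) * x ^ (p - 2)) := by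
          rw [← mul_rpow zero_le_two hx.le]
          gcongr
          · exact hc₂.trans (rpow_le_rpow_of_exponent_le one_le_two (by linarith))
          · linarith
      _ = x ^ (p - 2) := by
          rw [← mul_assoc, ← rpow_add two_pos]; norm_num

lemma mul_add_rpow_mul_sq_sub_le {x y s p c : ℝ} (hp : 1 < p) (hc₁ : c ≤ p - 1)
    (hc₂ : c ≤ 2 ^ (1 - p)) (hx : 0 ≤ x) (hy : 0 ≤ y) (hs : |s| ≤ x * y) :
    c * (x + y) ^ (p - 2) * (x ^ 2 - 2 * s + y ^ 2) ≤
      x ^ (p - 2) * x ^ 2 + y ^ (p - 2) * y ^ 2 - (x ^ (p - 2) + y ^ (p - 2)) * s := by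
  have hx1 := rpow_sub_two_mul_self hx hp.ne'
  have hy1 := rpow_sub_two_mul_self hy hp.ne'
  have hanti := mul_add_rpow_mul_add_sq_le hp hc₂ hx hy
  have hpar : c * (x + y) ^ (p - 2) * (x - y) ^ 2 ≤ (x ^ (p - 1) - y ^ (p - 1)) * (x - y) := by
    rcases le_total y x with hyx | hxy
    · exact mul_add_rpow_mul_sub_sq_le_of_le hp hc₁ hc₂ hy hyx
    · have := mul_add_rpow_mul_sub_sq_le_of_le hp hc₁ hc₂ hx hxy
      rw [add_comm] at this
      linarith
  rw [← hx1, ← hy1] at hanti hpar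
  have := mul_add_nonneg_of_mem_Icc (abs_le.1 hs)
    (m := 2 * c * (x + y) ^ (p - 2) - (x ^ (p - 2) + y ^ (p - 2)))
    (k := x ^ (p - 2) * x ^ 2 + y ^ (p - 2) * y ^ 2 - c * (x + y) ^ (p - 2) * (x ^ 2 + y ^ 2))
    (by linarith) (by linarith)
  linarith

end Real

variable {E : Type*} [NormedAddCommGroup E] [InnerProductSpace ℝ E]

lemma inner_rpow_norm_smul_sub_rpow_norm_smul (p : ℝ) (a b : E) :
    ⟪‖a‖ ^ (p - 2) • a - ‖b‖ ^ (p - 2) • b, a - b⟫ =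
      ‖a‖ ^ (p - 2) * ‖a‖ ^ 2 + ‖b‖ ^ (p - 2) * ‖b‖ ^ 2 -
        (‖a‖ ^ (p - 2) + ‖b‖ ^ (p - 2)) * ⟪a, b⟫ := by
  simp only [inner_sub_left, inner_sub_right, real_inner_smul_left, real_inner_self_eq_norm_sq,
    real_inner_comm b a]
  ring

lemma mul_add_rpow_mul_norm_sub_sq_le_inner {p c : ℝ} (hp : 1 < p) (hc₁ : c ≤ p - 1)
    (hc₂ : c ≤ 2 ^ (1 - p)) (a b : E) :
    c * (‖a‖ + ‖b‖) ^ (p - 2) * ‖a - b‖ ^ 2 ≤ ⟪‖a‖ ^ (p - 2) • a - ‖b‖ ^ (p - 2) • b, a - b⟫ := by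
  rw [inner_rpow_norm_smul_sub_rpow_norm_smul, norm_sub_sq_real]
  exact Real.mul_add_rpow_mul_sq_sub_le hp hc₁ hc₂ (norm_nonneg a) (norm_nonneg b)
    (abs_real_inner_le_norm a b)

/-- Algebraic inequality: for `1 < p < ∞` there exists `C = C(p) > 0` such that for all `N ≥ 1`
and all `a b : ℝ^N`,
`⟨|a|^{p-2} a − |b|^{p-2} b, a − b⟩ ≥ C (|a| + |b|)^{p-2} |a − b|²`,
where powers are real powers (with `0` raised to a negative exponent taken as `0`). -/
theorem stmt0 (p : ℝ) (hp1 : 1 < p) :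
    ∃ C : ℝ, 0 < C ∧ ∀ (N : ℕ), 1 ≤ N →
      ∀ a b : EuclideanSpace ℝ (Fin N),
        C * (‖a‖ + ‖b‖) ^ (p - 2) * ‖a - b‖ ^ 2 ≤
          ⟪(‖a‖ ^ (p - 2) • a - ‖b‖ ^ (p - 2) • b : EuclideanSpace ℝ (Fin N)), a - b⟫ :=
  ⟨min (p - 1) (2 ^ (1 - p)), lt_min (by linarith) (by positivity), fun _ _ a b =>
    mul_add_rpow_mul_norm_sub_sq_le_inner hp1 (min_le_left _ _) (min_le_right _ _) a b⟩
end

section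
/- Let V be a real separable reflexive Banach space with dual V*, and let A : V → V* be a map that is bounded (maps norm-bounded sets to norm-bounded sets), continuous (norm-to-norm), coercive (⟨A v, v⟩ / ‖v‖ → ∞ as ‖v‖ → ∞), and monotone (⟨A u − A v, u − v⟩ ≥ 0 for all u, v ∈ V). Then A is surjective: for every f ∈ V* there exists u ∈ V with A(u) = f. If moreover A is strictly monotone (⟨A u − A v, u − v⟩ > 0 whenever u ≠ v), then A is also injective. -/
/-!
Galerkin approximation followed by Minty's trick. If `e` is a dense sequence, on each
finite-dimensional space `span (e '' Iio n)` the restriction of `A - f` is continuous, monotone and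
coercive, hence has a zero `wₙ`, and coercivity bounds `‖wₙ‖` uniformly. A diagonal argument and
reflexivity give `u` with `(f - A eₖ) wₙ → (f - A eₖ) u` along a subsequence, and monotonicity
passes to the limit as `0 ≤ (f - A v) (u - v)` for `v = eₖ`, hence for all `v` by density. Putting
`v = u + t • z` and letting `t ↓ 0` yields `A u = f`.

The finite-dimensional step avoids Brouwer's theorem: `F + ε • id` is strongly monotone, its
mollifications are `C¹` and strongly monotone, hence onto (their range is closed because they
expand distances, and open by the inverse function theorem, the derivative being invertible by
Lax–Milgram), and compactness passes to the limit first in the mollification, then in `ε`.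
-/

open Filter Topology Set RealInnerProductSpace MeasureTheory Convolution ContinuousLinearMap

theorem AntilipschitzWith.isClosed_range_of_continuous {α β : Type*} [MetricSpace α]
    [CompleteSpace α] [MetricSpace β] {K : NNReal} {f : α → β} (hf : AntilipschitzWith K f)
    (hfc : Continuous f) : IsClosed (range f) := by
  refine isClosed_of_closure_subset fun y hy => ?_
  have hne : (comap f (𝓝 y)).NeBot :=
    comap_neBot_iff_frequently.2 (mem_closure_iff_frequently.1 hy)
  have hcauchy : Cauchy (comap f (𝓝 y)) := by
    refine ⟨hne, ?_⟩
    rw [← comap_prodMap_prod, ← nhds_prod_eq]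
    exact (comap_mono (nhds_le_uniformity y)).trans hf.comap_uniformity_le
  obtain ⟨x, hx⟩ := CompleteSpace.complete hcauchy
  exact ⟨x, tendsto_nhds_unique ((hfc.tendsto x).mono_left hx) tendsto_comap⟩

section InnerProduct

variable {E : Type*} [NormedAddCommGroup E] [InnerProductSpace ℝ E]

def IsStronglyMonotone (ε : ℝ) (G : E → E) : Prop :=
  ∀ x y, ε * ‖x - y‖ ^ 2 ≤ ⟪G x - G y, x - y⟫

namespace IsStronglyMonotone

variable {ε : ℝ} {G : E → E}

theorem mul_norm_sub_le (hG : IsStronglyMonotone ε G) (x y : E) :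
    ε * ‖x - y‖ ≤ ‖G x - G y‖ := by
  rcases eq_or_ne x y with rfl | hne
  · simp
  have hpos : 0 < ‖x - y‖ := norm_pos_iff.2 (sub_ne_zero.2 hne)
  have := (hG x y).trans (real_inner_le_norm _ _)
  nlinarith

theorem antilipschitzWith (hG : IsStronglyMonotone ε G) (hε : 0 < ε) :
    AntilipschitzWith (Real.toNNReal ε⁻¹) G := by
  refine AntilipschitzWith.of_le_mul_dist fun x y => ?_
  rw [Real.coe_toNNReal _ (inv_nonneg.2 hε.le), dist_eq_norm, dist_eq_norm, ← div_eq_inv_mul,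
    le_div_iff₀ hε, mul_comm]
  exact hG.mul_norm_sub_le x y

theorem mul_norm_sq_le_inner_of_hasFDerivAt (hG : IsStronglyMonotone ε G) {D : E →L[ℝ] E}
    {x : E} (hD : HasFDerivAt G D x) (h : E) : ε * ‖h‖ ^ 2 ≤ ⟪D h, h⟫ := by
  have hlim : Tendsto (fun c : ℝ => ⟪c • (G (x + c⁻¹ • h) - G x), h⟫) atTop (𝓝 ⟪D h, h⟫) :=
    ((continuous_id.inner continuous_const).tendsto (D h)).comp (hD.lim_real h)
  refine ge_of_tendsto hlim ?_
  filter_upwards [eventually_gt_atTop 0] with c hc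
  have := hG (x + c⁻¹ • h) x
  simp only [add_sub_cancel_left, norm_smul, inner_smul_right, Real.norm_eq_abs,
    abs_of_pos (inv_pos.2 hc)] at this
  rw [real_inner_smul_left]
  calc ε * ‖h‖ ^ 2 = c ^ 2 * (ε * (c⁻¹ * ‖h‖) ^ 2) := by field_simp
    _ ≤ c ^ 2 * (c⁻¹ * ⟪G (x + c⁻¹ • h) - G x, h⟫) := by gcongr
    _ = c * ⟪G (x + c⁻¹ • h) - G x, h⟫ := by field_simp

theorem isOpen_range [CompleteSpace E] (hG : IsStronglyMonotone ε G) (hε : 0 < ε)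
    (hGs : ContDiff ℝ 1 G) : IsOpen (range G) := by
  refine isOpen_iff_mem_nhds.2 ?_
  rintro _ ⟨x, rfl⟩
  have hD := hGs.hasStrictFDerivAt (x := x) one_ne_zero
  have hcoer : IsCoercive ((innerSL ℝ).comp (fderiv ℝ G x)) :=
    ⟨ε, hε, fun h => by
      simpa [sq, mul_assoc] using hG.mul_norm_sq_le_inner_of_hasFDerivAt hD.hasFDerivAt h⟩
  have he : (hcoer.continuousLinearEquivOfBilin : E →L[ℝ] E) = fderiv ℝ G x := by
    ext h
    refine ext_inner_right ℝ fun w => ?_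
    simp
  rw [← he] at hD
  rw [← hD.map_nhds_eq_of_equiv]
  exact range_mem_map

theorem surjective_of_contDiff [CompleteSpace E] (hG : IsStronglyMonotone ε G) (hε : 0 < ε)
    (hGs : ContDiff ℝ 1 G) : Function.Surjective G := by
  have hclopen : IsClopen (range G) :=
    ⟨(hG.antilipschitzWith hε).isClosed_range_of_continuous hGs.continuous,
      hG.isOpen_range hε hGs⟩
  exact range_eq_univ.1 (hclopen.eq_univ (range_nonempty G))

theorem convolution [FiniteDimensional ℝ E] [MeasurableSpace E] [BorelSpace E]
    (hG : IsStronglyMonotone ε G) (hGc : Continuous G) (μ : Measure E) [μ.IsAddHaarMeasure]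
    (φ : ContDiffBump (0 : E)) : IsStronglyMonotone ε (φ.normed μ ⋆[lsmul ℝ ℝ, μ] G) := by
  intro x y
  have hint : ∀ z, Integrable (fun t => φ.normed μ t • G (z - t)) μ := fun z =>
    (φ.continuous_normed.smul (hGc.comp (continuous_const.sub continuous_id))
      ).integrable_of_hasCompactSupport φ.hasCompactSupport_normed.smul_right
  have hinner : ⟪(φ.normed μ ⋆[lsmul ℝ ℝ, μ] G) x - (φ.normed μ ⋆[lsmul ℝ ℝ, μ] G) y, x - y⟫
      = ∫ t, φ.normed μ t * ⟪G (x - t) - G (y - t), x - y⟫ ∂μ := by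
    simp only [convolution_def, lsmul_apply]
    rw [← integral_sub (hint x) (hint y)]
    simp only [← smul_sub]
    rw [real_inner_comm,
      ← integral_inner (by simpa only [smul_sub, Pi.sub_def] using (hint x).sub (hint y))]
    simp only [real_inner_smul_right, real_inner_comm]
  have hint' : Integrable (fun t => φ.normed μ t * ⟪G (x - t) - G (y - t), x - y⟫) μ :=
    (φ.continuous_normed.mul (by fun_prop)).integrable_of_hasCompactSupport
      φ.hasCompactSupport_normed.mul_right
  calc ε * ‖x - y‖ ^ 2 = ∫ t, φ.normed μ t * (ε * ‖x - y‖ ^ 2) ∂μ := by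
        rw [integral_mul_const, φ.integral_normed, one_mul]
    _ ≤ ∫ t, φ.normed μ t * ⟪G (x - t) - G (y - t), x - y⟫ ∂μ := by
        refine integral_mono (φ.integrable_normed.mul_const _) hint' fun t => ?_
        have := hG (x - t) (y - t)
        rw [sub_sub_sub_cancel_right] at this
        exact mul_le_mul_of_nonneg_left this (φ.nonneg_normed t)
    _ = _ := hinner.symm

theorem surjective [FiniteDimensional ℝ E] (hG : IsStronglyMonotone ε G) (hε : 0 < ε)
    (hGc : Continuous G) : Function.Surjective G := by
  borelize E
  intro y
  let μ : Measure E := Measure.addHaar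
  let φ : ℕ → ContDiffBump (0 : E) := fun n =>
    ⟨1 / (n + 1) / 2, 1 / (n + 1), by positivity, half_lt_self (by positivity)⟩
  have hφ : Tendsto (fun n => (φ n).rOut) atTop (𝓝 0) := tendsto_one_div_add_atTop_nhds_zero_nat
  set Gn : ℕ → E → E := fun n => (φ n).normed μ ⋆[lsmul ℝ ℝ, μ] G
  choose x hx using fun n => (hG.convolution hGc μ (φ n)).surjective_of_contDiff hε
    ((φ n).hasCompactSupport_normed.contDiff_convolution_left _ (φ n).contDiff_normed
      hGc.locallyIntegrable) y
  obtain ⟨C, hC⟩ := isBounded_iff_forall_norm_le.1 (Metric.isBounded_range_of_tendsto _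
    (ContDiffBump.convolution_tendsto_right_of_continuous (μ := μ) hφ hGc 0))
  have hx_le : ∀ n, ‖x n‖ ≤ (‖y‖ + C) / ε := fun n => by
    have := (hG.convolution hGc μ (φ n)).mul_norm_sub_le (x n) 0
    rw [sub_zero, hx n] at this
    rw [le_div_iff₀ hε, mul_comm]
    exact this.trans ((norm_sub_le _ _).trans (by linarith [hC _ (mem_range_self n)]))
  obtain ⟨x₀, -, ψ, hψ, hlim⟩ := tendsto_subseq_of_bounded
    (Metric.isBounded_closedBall (x := 0) (r := (‖y‖ + C) / ε)) (x := x)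
    fun n => mem_closedBall_zero_iff.2 (hx_le n)
  have hconv : Tendsto (fun i => Gn (ψ i) (x (ψ i))) atTop (𝓝 (G x₀)) :=
    ContDiffBump.convolution_tendsto_right (hφ.comp hψ.tendsto_atTop)
      (Eventually.of_forall fun _ => hGc.aestronglyMeasurable)
      ((hGc.tendsto x₀).comp tendsto_snd) hlim
  simp only [Gn, hx, tendsto_const_nhds_iff] at hconv
  exact ⟨x₀, hconv.symm⟩

end IsStronglyMonotone

theorem isStronglyMonotone_add_smul {F : E → E} (hF : ∀ x y, 0 ≤ ⟪F x - F y, x - y⟫) (c : ℝ) :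
    IsStronglyMonotone c (fun x => F x + c • x) := fun x y => by
  rw [add_sub_add_comm, ← smul_sub, inner_add_left, real_inner_smul_left,
    real_inner_self_eq_norm_sq]
  linarith [hF x y]

theorem exists_eq_zero_of_monotone_of_inner_pos [FiniteDimensional ℝ E] {F : E → E}
    (hF : Continuous F) (hmono : ∀ x y, 0 ≤ ⟪F x - F y, x - y⟫) {ρ : ℝ}
    (hco : ∀ x, ρ < ‖x‖ → 0 < ⟪F x, x⟫) : ∃ x, F x = 0 := by
  have hc : ∀ n : ℕ, (0 : ℝ) < 1 / (n + 1) := fun n => by positivity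
  choose x hx using fun n : ℕ => ((isStronglyMonotone_add_smul hmono _).surjective (hc n)
    (hF.add (continuous_const_smul _))) 0
  have hFx : ∀ n, F (x n) = -((1 / ((n : ℝ) + 1)) • x n) := fun n =>
    eq_neg_of_add_eq_zero_left (hx n)
  have hx_le : ∀ n, ‖x n‖ ≤ ρ := fun n => by
    by_contra! h
    have := hco (x n) h
    rw [hFx, inner_neg_left, real_inner_smul_left] at this
    nlinarith [hc n, real_inner_self_nonneg (x := x n)]
  obtain ⟨x₀, -, ψ, hψ, hlim⟩ := tendsto_subseq_of_bounded (Metric.isBounded_closedBall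
    (x := 0) (r := ρ)) (x := x) fun n => mem_closedBall_zero_iff.2 (hx_le n)
  have hzero : Tendsto (fun n => F (x (ψ n))) atTop (𝓝 0) := by
    have hc0 := (tendsto_one_div_add_atTop_nhds_zero_nat (𝕜 := ℝ)).comp hψ.tendsto_atTop
    simpa [hFx] using (hc0.smul hlim).neg
  exact ⟨x₀, tendsto_nhds_unique ((hF.tendsto x₀).comp hlim) hzero⟩

end InnerProduct

theorem exists_eq_zero_of_monotone_of_apply_self_pos {W : Type*} [NormedAddCommGroup W]
    [NormedSpace ℝ W] [FiniteDimensional ℝ W] {G : W → StrongDual ℝ W} (hG : Continuous G)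
    (hmono : ∀ x y, 0 ≤ (G x - G y) (x - y)) {ρ : ℝ} (hco : ∀ x, ρ < ‖x‖ → 0 < G x x) :
    ∃ x, G x = 0 := by
  let T : EuclideanSpace ℝ (Fin (Module.finrank ℝ W)) ≃L[ℝ] W :=
    ContinuousLinearEquiv.ofFinrankEq (by simp)
  let F := fun z => (InnerProductSpace.toDual ℝ _).symm ((G (T z)).comp T.toContinuousLinearMap)
  have hF : ∀ z w, ⟪F z, w⟫ = G (T z) (T w) := fun z w => InnerProductSpace.toDual_symm_apply
  obtain ⟨z, hz⟩ : ∃ z, F z = 0 := by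
    refine exists_eq_zero_of_monotone_of_inner_pos
      (ρ := ‖T.symm.toContinuousLinearMap‖ * ρ) ?_ ?_ ?_
    · exact (InnerProductSpace.toDual ℝ _).symm.continuous.comp
        ((hG.comp T.continuous).clm_comp continuous_const)
    · intro z w
      rw [inner_sub_left, hF, hF, map_sub]
      simpa using hmono (T z) (T w)
    · intro z hz
      rw [hF]
      refine hco _ (lt_of_not_ge fun h => hz.not_ge ?_)
      calc ‖z‖ = ‖T.symm.toContinuousLinearMap (T z)‖ := by simp
        _ ≤ _ := T.symm.toContinuousLinearMap.le_opNorm _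
        _ ≤ _ := by gcongr
  refine ⟨T z, ContinuousLinearMap.ext fun w => ?_⟩
  rw [← T.apply_symm_apply w, ← hF, hz, inner_zero_left]
  rfl

theorem exists_forall_mul_norm_lt_of_tendsto_div_norm {α : Type*} [Norm α] {q : α → ℝ}
    (hq : Tendsto (fun v => q v / ‖v‖) (comap norm atTop) atTop) (C : ℝ) :
    ∃ ρ, ∀ v, ρ < ‖v‖ → C * ‖v‖ < q v := by
  obtain ⟨ρ, hρ⟩ := eventually_atTop.1 (eventually_comap.1 (hq.eventually_gt_atTop C))
  refine ⟨max ρ 0, fun v hv => ?_⟩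
  rw [max_lt_iff] at hv
  exact (lt_div_iff₀ hv.2).1 (hρ _ hv.1.le v rfl)

section Dual

variable {V : Type*} [NormedAddCommGroup V] [NormedSpace ℝ V]

theorem exists_mem_forall_apply_eq_of_finiteDimensional {A : V → StrongDual ℝ V}
    (hA : Continuous A) (hmono : ∀ u v, 0 ≤ (A u - A v) (u - v)) {f : StrongDual ℝ V} {ρ : ℝ}
    (hco : ∀ v, ρ < ‖v‖ → ‖f‖ * ‖v‖ < A v v) (W : Submodule ℝ V) [FiniteDimensional ℝ W] :
    ∃ w ∈ W, ‖w‖ ≤ ρ ∧ ∀ v ∈ W, A w v = f v := by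
  have hf : ∀ v, f v ≤ ‖f‖ * ‖v‖ := fun v => (le_abs_self _).trans (f.le_opNorm v)
  obtain ⟨w, hw⟩ := exists_eq_zero_of_monotone_of_apply_self_pos
    (G := fun w : W => (A w - f).comp W.subtypeL)
    (((hA.comp continuous_subtype_val).sub continuous_const).clm_comp continuous_const)
    (fun x y => by simpa using hmono x y)
    (ρ := ρ) (fun w hw => by simpa using (hf w).trans_lt (hco w hw))
  have hwf : ∀ v ∈ W, A w v = f v := fun v hv => by
    simpa [sub_eq_zero] using DFunLike.congr_fun hw ⟨v, hv⟩
  refine ⟨w, w.2, le_of_not_gt fun hlt => ?_, hwf⟩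
  linarith [hco w hlt, hf w, hwf w w.2]

theorem exists_subseq_forall_tendsto_apply (g : ℕ → StrongDual ℝ V) {x : ℕ → V} {K : ℝ}
    (hx : ∀ n, ‖x n‖ ≤ K) :
    ∃ ψ : ℕ → ℕ, StrictMono ψ ∧ ∀ k, ∃ l, Tendsto (fun n => g k (x (ψ n))) atTop (𝓝 l) := by
  have hmem : ∀ n, (fun k => g k (x n)) ∈ univ.pi fun k => Icc (-(‖g k‖ * K)) (‖g k‖ * K) :=
    fun n => mem_univ_pi.2 fun k => abs_le.1 ((g k).le_of_opNorm_le_of_le le_rfl (hx n))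
  obtain ⟨L, -, ψ, hψ, hL⟩ := (isCompact_univ_pi fun k => isCompact_Icc).isSeqCompact hmem
  exact ⟨ψ, hψ, fun k => ⟨L k, tendsto_pi_nhds.1 hL k⟩⟩

theorem exists_forall_tendsto_apply_of_surjective_inclusionInDoubleDual
    (hrefl : Function.Surjective (NormedSpace.inclusionInDoubleDual ℝ V)) {x : ℕ → V} {K : ℝ}
    (hx : ∀ n, ‖x n‖ ≤ K) :
    ∃ u : V, ∀ φ : StrongDual ℝ V, ∀ l, Tendsto (fun n => φ (x n)) atTop (𝓝 l) → l = φ u := by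
  let p : Submodule ℝ (StrongDual ℝ V) :=
    { carrier := {φ | ∃ l, Tendsto (fun n => φ (x n)) atTop (𝓝 l)}
      add_mem' := fun ⟨l, hl⟩ ⟨l', hl'⟩ => ⟨l + l', hl.add hl'⟩
      zero_mem' := ⟨0, tendsto_const_nhds⟩
      smul_mem' := fun c _ ⟨l, hl⟩ => ⟨c * l, hl.const_mul c⟩ }
  have hlim : ∀ φ : p,
      Tendsto (fun n => φ.1 (x n)) atTop (𝓝 (limUnder atTop fun n => φ.1 (x n))) :=
    fun φ => tendsto_nhds_limUnder φ.2
  let L : p →ₗ[ℝ] ℝ :=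
    { toFun := fun φ => limUnder atTop fun n => φ.1 (x n)
      map_add' := fun φ ψ => ((hlim φ).add (hlim ψ)).limUnder_eq
      map_smul' := fun c φ => ((hlim φ).const_mul c).limUnder_eq }
  have hL : ∀ φ : p, ‖L φ‖ ≤ K * ‖φ‖ := fun φ => by
    refine le_of_tendsto (hlim φ).norm (Eventually.of_forall fun n => ?_)
    rw [mul_comm]
    exact φ.1.le_of_opNorm_le_of_le le_rfl (hx n)
  obtain ⟨Ψ, hΨ, -⟩ := exists_extension_norm_eq p (L.mkContinuous K hL)
  obtain ⟨u, rfl⟩ := hrefl Ψ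
  exact ⟨u, fun φ l hφ => (tendsto_nhds_unique hφ (hlim ⟨φ, l, hφ⟩)).trans (hΨ ⟨φ, l, hφ⟩).symm⟩

theorem eq_of_forall_nonneg_sub_apply_sub {A : V → StrongDual ℝ V} (hA : Continuous A)
    {f : StrongDual ℝ V} {u : V} (h : ∀ v, 0 ≤ (f - A v) (u - v)) : A u = f := by
  have hle : ∀ z, (f - A u) z ≤ 0 := fun z => by
    have hcont : Continuous fun t : ℝ => (f - A (u + t • z)) z := by fun_prop
    have hlim : Tendsto (fun t : ℝ => (f - A (u + t • z)) z) (𝓝[>] 0) (𝓝 ((f - A u) z)) := by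
      simpa using (hcont.tendsto 0).mono_left nhdsWithin_le_nhds
    refine le_of_tendsto hlim ?_
    filter_upwards [self_mem_nhdsWithin] with t (ht : 0 < t)
    have := h (u + t • z)
    rw [sub_add_cancel_left, map_neg, map_smul, smul_eq_mul] at this
    nlinarith
  refine (sub_eq_zero.1 (ContinuousLinearMap.ext fun z => ?_)).symm
  exact le_antisymm (hle z) (by simpa using hle (-z))

theorem nonneg_sub_apply_sub_of_tendsto {A : V → StrongDual ℝ V}
    (hmono : ∀ u v, 0 ≤ (A u - A v) (u - v)) {f : StrongDual ℝ V} {w : ℕ → V} {u e : V}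
    (hw : ∀ᶠ n in atTop, A (w n) (w n) = f (w n) ∧ A (w n) e = f e)
    (hlim : Tendsto (fun n => (f - A e) (w n)) atTop (𝓝 ((f - A e) u))) :
    0 ≤ (f - A e) (u - e) := by
  have key : ∀ᶠ n in atTop, 0 ≤ (f - A e) (w n) - (f - A e) e := hw.mono fun n ⟨h₁, h₂⟩ => by
    have := hmono (w n) e
    simp only [sub_apply, map_sub] at this ⊢
    linarith
  rw [map_sub]
  exact ge_of_tendsto (hlim.sub_const _) key

end Dual

theorem stmt1_general (V : Type*) [NormedAddCommGroup V] [NormedSpace ℝ V]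
    [TopologicalSpace.SeparableSpace V]
    (hrefl : Function.Surjective (NormedSpace.inclusionInDoubleDual ℝ V))
    (A : V → StrongDual ℝ V)
    (hcont : Continuous A)
    (hcoercive : Tendsto (fun v : V => A v v / ‖v‖) (Filter.comap norm Filter.atTop) Filter.atTop)
    (hmono : ∀ u v : V, 0 ≤ (A u - A v) (u - v)) :
    Function.Surjective A ∧
      ((∀ u v : V, u ≠ v → 0 < (A u - A v) (u - v)) → Function.Injective A) := by
  refine ⟨fun f => ?_, fun hstrict u v huv =>
    by_contra fun hne => (hstrict u v hne).ne' (by rw [huv, sub_self]; rfl)⟩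
  · obtain ⟨ρ, hρ⟩ := exists_forall_mul_norm_lt_of_tendsto_div_norm hcoercive ‖f‖
    obtain ⟨e, he⟩ := TopologicalSpace.exists_dense_seq V
    choose w hwW hw_le hw using fun n =>
      have := FiniteDimensional.span_of_finite ℝ ((finite_Iio n).image e)
      exists_mem_forall_apply_eq_of_finiteDimensional hcont hmono hρ
        (Submodule.span ℝ (e '' Iio n))
    obtain ⟨ψ, hψ, hconv⟩ := exists_subseq_forall_tendsto_apply (fun k => f - A (e k)) hw_le
    obtain ⟨u, hu⟩ :=
      exists_forall_tendsto_apply_of_surjective_inclusionInDoubleDual hrefl fun n => hw_le (ψ n)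
    refine ⟨u, eq_of_forall_nonneg_sub_apply_sub hcont fun v =>
      he.induction_on v (isClosed_le continuous_const (by fun_prop)) fun k => ?_⟩
    obtain ⟨l, hl⟩ := hconv k
    refine nonneg_sub_apply_sub_of_tendsto hmono ?_ (hu _ l hl ▸ hl)
    filter_upwards [hψ.tendsto_atTop.eventually_gt_atTop k] with n hn
    exact ⟨hw _ _ (hwW _), hw _ _ (Submodule.subset_span (mem_image_of_mem e hn))⟩

/-- Minty–Browder: a bounded, continuous, coercive, monotone (not necessarily linear) operator
`A` from a real separable reflexive Banach space `V` into its dual `V*` is surjective; if `A` is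
moreover strictly monotone, it is injective. -/
theorem stmt1 (V : Type*) [NormedAddCommGroup V] [NormedSpace ℝ V] [CompleteSpace V]
    [TopologicalSpace.SeparableSpace V]
    (hrefl : Function.Surjective (NormedSpace.inclusionInDoubleDual ℝ V))
    (A : V → StrongDual ℝ V)
    (hbdd : ∀ s : Set V, Bornology.IsBounded s → Bornology.IsBounded (A '' s))
    (hcont : Continuous A)
    (hcoercive : Tendsto (fun v : V => A v v / ‖v‖) (Filter.comap norm Filter.atTop) Filter.atTop)
    (hmono : ∀ u v : V, 0 ≤ (A u - A v) (u - v)) :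
    Function.Surjective A ∧
      ((∀ u v : V, u ≠ v → 0 < (A u - A v) (u - v)) → Function.Injective A) :=
  stmt1_general V hrefl A hcont hcoercive hmono
end
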